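/- Under the assumptions λ₁ ≥ λ₂ ≥ 0, α ∈ [0,1/2], |γ| ≤ 1, for any unit vector (u,v) and the corresponding tensor entries a = λ₁u²+λ₂v², b = (λ₁−λ₂)uv, c = λ₂u²+λ₁v², δ = α(a+c)+γ(1−2α)sgn(b)b, the quantity m₋ := (a−δ) + (δ−b) + (c−δ) also satisfies max_{u,v} m₋ = (1−α)(λ₁+λ₂) + (1/2)(1−γ(1−2α))(λ₁−λ₂), attained at u = −v = 1/√2. -/

import Mathlib

/-!
On the unit circle the diagonal terms collapse, a + c = λ₁ + λ₂, and sgn(b) b = |b|, so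
m₋ = (1 - α)(λ₁ + λ₂) - b - κ|b| with κ = γ(1 - 2α) ≤ 1. Hence m₋ ≤ (1 - α)(λ₁ + λ₂) + (1 - κ)|b|,
and |b| = (λ₁ - λ₂)|uv| ≤ (λ₁ - λ₂)/2, with equality at u = -v = 1/√2, where b = -(λ₁ - λ₂)/2.
-/

/-- The quantity m₋ = (a−δ) + (δ−b) + (c−δ) as a function of the eigenvector entries. -/
noncomputable def mMinus (l1 l2 α γ u v : ℝ) : ℝ :=
  let a := l1 * u ^ 2 + l2 * v ^ 2
  let b := (l1 - l2) * (u * v)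
  let c := l2 * u ^ 2 + l1 * v ^ 2
  let δ := α * (a + c) + γ * (1 - 2 * α) * Real.sign b * b
  (a - δ) + (δ - b) + (c - δ)

lemma Real.sign_mul_self_eq_abs (b : ℝ) : Real.sign b * b = |b| := by
  rcases lt_trichotomy b 0 with h | rfl | h
  · simp [Real.sign_of_neg h, abs_of_neg h]
  · simp
  · simp [Real.sign_of_pos h, abs_of_pos h]

lemma abs_mul_le_half_of_sq_add_sq_eq_one {u v : ℝ} (huv : u ^ 2 + v ^ 2 = 1) :
    |u * v| ≤ 1 / 2 := by
  rw [abs_le]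
  constructor <;> nlinarith [sq_nonneg (u - v), sq_nonneg (u + v)]

lemma neg_sub_mul_abs_le {b k B : ℝ} (hk : k ≤ 1) (hb : |b| ≤ B) :
    -b - k * |b| ≤ (1 - k) * B :=
  calc -b - k * |b| ≤ (1 - k) * |b| := by linarith [neg_le_abs b]
    _ ≤ (1 - k) * B := mul_le_mul_of_nonneg_left hb (sub_nonneg.2 hk)

lemma mMinus_eq_of_sq_add_sq_eq_one {l1 l2 α γ u v : ℝ} (huv : u ^ 2 + v ^ 2 = 1) :
    mMinus l1 l2 α γ u v = (1 - α) * (l1 + l2) - (l1 - l2) * (u * v)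
      - γ * (1 - 2 * α) * |(l1 - l2) * (u * v)| := by
  simp only [mMinus]
  rw [mul_assoc (γ * (1 - 2 * α)), Real.sign_mul_self_eq_abs]
  linear_combination (1 - α) * (l1 + l2) * huv

lemma mMinus_le {l1 l2 α γ u v : ℝ} (h12 : l2 ≤ l1) (hκ : γ * (1 - 2 * α) ≤ 1)
    (huv : u ^ 2 + v ^ 2 = 1) :
    mMinus l1 l2 α γ u v ≤
      (1 - α) * (l1 + l2) + (1 / 2) * (1 - γ * (1 - 2 * α)) * (l1 - l2) := by
  have hb : |(l1 - l2) * (u * v)| ≤ (l1 - l2) / 2 := by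
    rw [abs_mul, abs_of_nonneg (sub_nonneg.2 h12)]
    nlinarith [abs_mul_le_half_of_sq_add_sq_eq_one huv]
  rw [mMinus_eq_of_sq_add_sq_eq_one huv]
  linarith [neg_sub_mul_abs_le hκ hb]

lemma mMinus_antidiagonal {l1 l2 α γ s : ℝ} (h12 : l2 ≤ l1) (hs : s ^ 2 = 1 / 2) :
    mMinus l1 l2 α γ s (-s) =
      (1 - α) * (l1 + l2) + (1 / 2) * (1 - γ * (1 - 2 * α)) * (l1 - l2) := by
  have hb : (l1 - l2) * (s * -s) = -((l1 - l2) / 2) := by linear_combination (l2 - l1) * hs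
  rw [mMinus_eq_of_sq_add_sq_eq_one (by linear_combination 2 * hs), hb, abs_neg,
    abs_of_nonneg (by linarith)]
  ring

lemma one_div_sqrt_two_sq : (1 / Real.sqrt 2) ^ 2 = 1 / 2 := by
  rw [div_pow, Real.sq_sqrt zero_le_two, one_pow]

theorem max_mMinus_general (l1 l2 α γ : ℝ)
    (h12 : l2 ≤ l1)
    (hα : α ∈ Set.Icc (0 : ℝ) (1 / 2)) (hγ : |γ| ≤ 1) :
    IsGreatest {m : ℝ | ∃ u v : ℝ, u ^ 2 + v ^ 2 = 1 ∧ m = mMinus l1 l2 α γ u v}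
      ((1 - α) * (l1 + l2) + (1 / 2) * (1 - γ * (1 - 2 * α)) * (l1 - l2)) ∧
    mMinus l1 l2 α γ (1 / Real.sqrt 2) (-(1 / Real.sqrt 2)) =
      (1 - α) * (l1 + l2) + (1 / 2) * (1 - γ * (1 - 2 * α)) * (l1 - l2) := by
  have hκ : γ * (1 - 2 * α) ≤ 1 :=
    calc γ * (1 - 2 * α) ≤ |γ| * (1 - 2 * α) :=
          mul_le_mul_of_nonneg_right (le_abs_self γ) (by linarith [hα.2])
      _ ≤ 1 := by nlinarith [abs_nonneg γ, hα.1, hα.2]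
  have hmax := mMinus_antidiagonal (α := α) (γ := γ) h12 one_div_sqrt_two_sq
  refine ⟨⟨⟨_, _, by linear_combination 2 * one_div_sqrt_two_sq, hmax.symm⟩, ?_⟩, hmax⟩
  rintro m ⟨u, v, huv, rfl⟩
  exact mMinus_le h12 hκ huv

theorem max_mMinus (l1 l2 α γ : ℝ)
    (h12 : l2 ≤ l1) (h2 : 0 ≤ l2)
    (hα : α ∈ Set.Icc (0 : ℝ) (1 / 2)) (hγ : |γ| ≤ 1) :
    IsGreatest {m : ℝ | ∃ u v : ℝ, u ^ 2 + v ^ 2 = 1 ∧ m = mMinus l1 l2 α γ u v}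
      ((1 - α) * (l1 + l2) + (1 / 2) * (1 - γ * (1 - 2 * α)) * (l1 - l2)) ∧
    mMinus l1 l2 α γ (1 / Real.sqrt 2) (-(1 / Real.sqrt 2)) =
      (1 - α) * (l1 + l2) + (1 / 2) * (1 - γ * (1 - 2 * α)) * (l1 - l2) :=
  max_mMinus_general l1 l2 α γ h12 hα hγ
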